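/- Suppose T is an ε-approximate decision tree w.r.t. (S, Φ) and Φ is γ-balanced. Then for every vertex v of T with child w, |S(T,w)| ≥ (γ − 2ε)·|S(T,v)|. -/

import Mathlib

/-- Edit distance (symmetric difference size) of two multisets. -/
def symmDist {α : Type} [DecidableEq α] (S S' : Multiset α) : ℕ :=
  (S - S').card + (S' - S).card

/-- Relative edit distance `ED*(S,S') = △(S,S') / max(|S|,|S'|)`. -/
noncomputable def edStar {α : Type} [DecidableEq α] (S S' : Multiset α) : ℝ :=
  (symmDist S S' : ℝ) / ((max S.card S'.card : ℕ) : ℝ)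

/-- Binary decision trees: each internal vertex carries a split rule `α → Bool`. -/
inductive DTree (α : Type) where
  | leaf : DTree α
  | node : (α → Bool) → DTree α → DTree α → DTree α

/-- `Occurs T S t A` says that `t` is a subtree (vertex) of `T` and `A = S(T,v)` is
the submultiset of `S` reaching it. -/
inductive Occurs {α : Type} : DTree α → Multiset α → DTree α → Multiset α → Prop
  | refl (t : DTree α) (S : Multiset α) : Occurs t S t S
  | left {t : DTree α} {S : Multiset α} {σ : α → Bool} {t0 t1 : DTree α}
      {A : Multiset α} : Occurs t S (DTree.node σ t0 t1) A →
      Occurs t S t0 (A.filter fun x => σ x = false)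
  | right {t : DTree α} {S : Multiset α} {σ : α → Bool} {t0 t1 : DTree α}
      {A : Multiset α} : Occurs t S (DTree.node σ t0 t1) A →
      Occurs t S t1 (A.filter fun x => σ x = true)

/-- `T` is `ε`-approximate w.r.t. `(S,Φ)`: the decision (split rule or leaf) at each
vertex `v` equals `Φ(S_v)` for some multiset `S_v` with `ED*(S(T,v),S_v) ≤ ε`.
A decision rule `Φ` returns `some σ` (a split rule) or `none` (make a leaf). -/
def EpsApproxOn {α : Type} [DecidableEq α] (Φ : Multiset α → Option (α → Bool))
    (ε : ℝ) : DTree α → Multiset α → Prop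
  | DTree.leaf, S => ∃ Sv : Multiset α, edStar S Sv ≤ ε ∧ Φ Sv = none
  | DTree.node σ t0 t1, S =>
      (∃ Sv : Multiset α, edStar S Sv ≤ ε ∧ Φ Sv = some σ) ∧
      EpsApproxOn Φ ε t0 (S.filter fun x => σ x = false) ∧
      EpsApproxOn Φ ε t1 (S.filter fun x => σ x = true)

/-!
At a vertex `v` the split was chosen by `Φ` on a multiset `S_v` within relative edit distance `ε`
of `A = S(T,v)`. Balance of `Φ` gives `γ |S_v|` points of `S_v` on each side, and moving from `S_v`
back to `A` loses at most `△(A, S_v)` of them. Since `△ ≤ ε · max(|A|, |S_v|) ≤ ε (|A| + △)`,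
we get `(1 - ε) △ ≤ ε |A|`, hence `△ ≤ 2ε |A|` once `ε ≤ 1/2`; for `ε > 1/2` the bound is trivial.
-/

namespace Multiset

variable {α : Type} [DecidableEq α]

theorem card_le_card_add_card_tsub (s t : Multiset α) : card s ≤ card t + card (s - t) := by
  simpa only [card_add] using card_le_card (le_add_tsub : s ≤ t + (s - t))

theorem card_filter_le_card_filter_add_card_tsub (p : α → Prop) [DecidablePred p]
    (s t : Multiset α) : card (t.filter p) ≤ card (s.filter p) + card (t - s) := by
  calc card (t.filter p) ≤ card ((s + (t - s)).filter p) :=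
        card_le_card (filter_le_filter p le_add_tsub)
    _ = card (s.filter p) + card ((t - s).filter p) := by rw [filter_add, card_add]
    _ ≤ card (s.filter p) + card (t - s) := Nat.add_le_add_left (card_le_card (filter_le p _)) _

end Multiset

section EditDistance

variable {α : Type} [DecidableEq α]

theorem one_sub_mul_symmDist_le_of_edStar_le {ε : ℝ} {A B : Multiset α}
    (h : edStar A B ≤ ε) : (1 - ε) * (symmDist A B : ℝ) ≤ ε * A.card := by
  set M : ℕ := max A.card B.card
  rcases Nat.eq_zero_or_pos M with hM | hM
  · have hA : A = 0 := Multiset.card_eq_zero.mp (by omega)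
    have hB : B = 0 := Multiset.card_eq_zero.mp (by omega)
    simp [hA, hB, symmDist]
  have hdist : (symmDist A B : ℝ) ≤ ε * M := by
    rwa [edStar, div_le_iff₀ (by exact_mod_cast hM)] at h
  have hM_le : (M : ℝ) ≤ A.card + symmDist A B := by
    have := Multiset.card_le_card_add_card_tsub B A
    exact_mod_cast max_le (Nat.le_add_right _ _) (by unfold symmDist; omega)
  have hε : 0 ≤ ε := by
    by_contra! hε
    have : ε * (M : ℝ) < 0 := mul_neg_of_neg_of_pos hε (by exact_mod_cast hM)
    linarith [(symmDist A B).cast_nonneg (α := ℝ)]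
  nlinarith [mul_le_mul_of_nonneg_left hM_le hε]

theorem sub_symmDist_le_card_filter {γ : ℝ} (hγ0 : 0 ≤ γ) (hγ1 : γ ≤ 1) (p : α → Prop)
    [DecidablePred p] (A : Multiset α) {B : Multiset α} (hB : γ * B.card ≤ (B.filter p).card) :
    γ * A.card - symmDist A B ≤ (A.filter p).card := by
  have hcard : (A.card : ℝ) ≤ B.card + (A - B).card := by
    exact_mod_cast Multiset.card_le_card_add_card_tsub A B
  have hfilter : ((B.filter p).card : ℝ) ≤ (A.filter p).card + (B - A).card := by
    exact_mod_cast Multiset.card_filter_le_card_filter_add_card_tsub p A B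
  have hd : (0 : ℝ) ≤ (A - B).card := Nat.cast_nonneg _
  simp only [symmDist, Nat.cast_add]
  nlinarith [mul_le_mul_of_nonneg_left hcard hγ0]

end EditDistance

theorem epsApproxOn_of_occurs {α : Type} [DecidableEq α] {Φ : Multiset α → Option (α → Bool)}
    {ε : ℝ} {T t : DTree α} {S A : Multiset α} (hocc : Occurs T S t A)
    (happ : EpsApproxOn Φ ε T S) : EpsApproxOn Φ ε t A := by
  induction hocc with
  | refl => exact happ
  | left _ ih => exact ih.2.1
  | right _ ih => exact ih.2.2

theorem stmt13_general {α : Type} [DecidableEq α] (Φ : Multiset α → Option (α → Bool))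
    (γ ε : ℝ) (hγ0 : 0 < γ) (hγ1 : γ ≤ 1)
    (hbal : ∀ (S : Multiset α) (σ : α → Bool), Φ S = some σ →
      ∀ b : Bool, γ * (S.card : ℝ) ≤ ((S.filter fun x => σ x = b).card : ℝ))
    (T : DTree α) (S : Multiset α)
    (happ : EpsApproxOn Φ ε T S)
    {σ : α → Bool} {t0 t1 : DTree α} {A : Multiset α}
    (hocc : Occurs T S (DTree.node σ t0 t1) A) :
    ∀ b : Bool, (γ - 2 * ε) * (A.card : ℝ) ≤
      ((A.filter fun x => σ x = b).card : ℝ) := by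
  intro b
  obtain ⟨Sv, hed, hΦ⟩ := (epsApproxOn_of_occurs hocc happ).1
  have hdist := one_sub_mul_symmDist_le_of_edStar_le hed
  have hbalA := sub_symmDist_le_card_filter hγ0.le hγ1 (fun x => σ x = b) A (hbal Sv σ hΦ b)
  rcases le_or_gt ε (1 / 2) with hε | hε
  · have hsmall : (symmDist A Sv : ℝ) ≤ 2 * ε * A.card := by
      nlinarith [(symmDist A Sv).cast_nonneg (α := ℝ)]
    linarith
  · have hneg : γ - 2 * ε < 0 := by linarith
    exact (mul_nonpos_of_nonpos_of_nonneg hneg.le (Nat.cast_nonneg _)).trans (Nat.cast_nonneg _)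

/-- If `T` is `ε`-approximate w.r.t. `(S,Φ)` and `Φ` is `γ`-balanced, then for every
vertex `v` of `T` with child `w`, `|S(T,w)| ≥ (γ − 2ε)·|S(T,v)|`. -/
theorem stmt13 {α : Type} [DecidableEq α] (Φ : Multiset α → Option (α → Bool))
    (γ ε : ℝ) (hε0 : 0 < ε) (hε1 : ε < 1) (hγ0 : 0 < γ) (hγ1 : γ ≤ 1)
    (hbal : ∀ (S : Multiset α) (σ : α → Bool), Φ S = some σ →
      ∀ b : Bool, γ * (S.card : ℝ) ≤ ((S.filter fun x => σ x = b).card : ℝ))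
    (T : DTree α) (S : Multiset α) (hS : S ≠ 0)
    (happ : EpsApproxOn Φ ε T S)
    {σ : α → Bool} {t0 t1 : DTree α} {A : Multiset α}
    (hocc : Occurs T S (DTree.node σ t0 t1) A) :
    ∀ b : Bool, (γ - 2 * ε) * (A.card : ℝ) ≤
      ((A.filter fun x => σ x = b).card : ℝ) :=
  stmt13_general Φ γ ε hγ0 hγ1 hbal T S happ hocc
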